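/- Let Γ = [[0, γ₁₂],[γ₂₁, 0]] be a 2×2 gain matrix with γ₁₂, γ₂₁ ∈ K_∞, and let D(s₁,s₂) = ((Id+α₁)(s₁), (Id+α₂)(s₂)) with α₁, α₂ ∈ K_∞. Then the condition (Γ∘D)(s) ≱ s for all s ∈ ℝ₊² \ {0} holds if and only if γ₁₂∘(Id+α₂)∘γ₂₁∘(Id+α₁)(s) < s for all s > 0. -/

import Mathlib

/-!
If `s₀ ≤ γ₁₂ (s₁ + α₂ s₁)` and `s₁ ≤ γ₂₁ (s₀ + α₁ s₀)`, feeding the second inequality into the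
first through the monotone map `γ₁₂ ∘ (Id + α₂)` bounds `s₀` by the cyclic gain applied to `s₀`.
So a nonzero solution of `(Γ ∘ D)(s) ≥ s` contradicts the cyclic condition at `s₀`, once `s₀ = 0`
is excluded (it forces `s₁ ≤ γ₂₁ 0 = 0`). Conversely, `(s, γ₂₁ (s + α₁ s))` satisfies the second
inequality with equality, so the matrix condition at this vector is the cyclic condition at `s`.
-/

open scoped NNReal

/-- A function `γ : ℝ₊ → ℝ₊` is of class `K∞` if it is continuous, strictly increasing,
vanishes at `0` and is unbounded. -/
def ClassKInf (γ : ℝ≥0 → ℝ≥0) : Prop :=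
  Continuous γ ∧ StrictMono γ ∧ γ 0 = 0 ∧ ∀ M : ℝ≥0, ∃ r : ℝ≥0, M < γ r

namespace ClassKInf

variable {γ : ℝ≥0 → ℝ≥0}

theorem monotone (hγ : ClassKInf γ) : Monotone γ :=
  hγ.2.1.monotone

theorem map_zero (hγ : ClassKInf γ) : γ 0 = 0 :=
  hγ.2.2.1

end ClassKInf

theorem le_cycle_of_le_of_le {M : Type*} [AddCommMonoid M] [PartialOrder M]
    [IsOrderedAddMonoid M] {γ₁₂ γ₂₁ α₁ α₂ : M → M} (hγ₁₂ : Monotone γ₁₂) (hα₂ : Monotone α₂)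
    {s₀ s₁ : M} (h₀ : s₀ ≤ γ₁₂ (s₁ + α₂ s₁)) (h₁ : s₁ ≤ γ₂₁ (s₀ + α₁ s₀)) :
    s₀ ≤ γ₁₂ (γ₂₁ (s₀ + α₁ s₀) + α₂ (γ₂₁ (s₀ + α₁ s₀))) :=
  h₀.trans (hγ₁₂ (monotone_id.add hα₂ h₁))

/-- For two subsystems, the matrix small-gain condition `(Γ∘D)(s) ≱ s` for all
`s ≠ 0` is equivalent to the cyclic condition
`γ₁₂∘(Id+α₂)∘γ₂₁∘(Id+α₁)(s) < s` for all `s > 0`. -/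
theorem two_systems_small_gain_equiv
    (γ₁₂ γ₂₁ α₁ α₂ : ℝ≥0 → ℝ≥0)
    (h12 : ClassKInf γ₁₂) (h21 : ClassKInf γ₂₁)
    (hα1 : ClassKInf α₁) (hα2 : ClassKInf α₂) :
    (∀ s : Fin 2 → ℝ≥0, s ≠ 0 →
        ¬ (s 0 ≤ γ₁₂ (s 1 + α₂ (s 1)) ∧ s 1 ≤ γ₂₁ (s 0 + α₁ (s 0)))) ↔
      (∀ s : ℝ≥0, 0 < s →
        γ₁₂ (γ₂₁ (s + α₁ s) + α₂ (γ₂₁ (s + α₁ s))) < s) := by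
  constructor
  · intro hmatrix s hs
    have hne : ![s, γ₂₁ (s + α₁ s)] ≠ 0 := fun h => hs.ne' (congrFun h 0)
    simpa using hmatrix _ hne
  · rintro hcycle s hs ⟨h₀, h₁⟩
    rcases eq_zero_or_pos (s 0) with hs₀ | hs₀
    · refine hs (funext fun i => ?_)
      fin_cases i
      · exact hs₀
      · simpa [hs₀, hα1.map_zero, h21.map_zero] using h₁
    · exact (hcycle _ hs₀).not_ge (le_cycle_of_le_of_le h12.monotone hα2.monotone h₀ h₁)
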